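/- arXiv:1211.0135 — 6 statements merged into one kernel-verified Lean document; each statement's English description precedes it below -/
import Mathlib

section
/- Let ρ > 0 and let the noise spectral density S_ν on ℝ² equal 1 on [−aρ, aρ] × [−aρ, aρ] and 0 elsewhere, where a is a positive odd integer. Then the static-sampling noise variance σ²_stat = (1/4π²) ∫_Ω Σ_{n∈ℤ²} S_ν(ω − 2nρ) dω equals ρ²a²/π², and the mobile-sampling noise variance σ²_m1 = (1/4π²) ∫_Ω Σ_{n∈ℤ} S_ν(ω − (0, 2nρ)) dω equals ρ²a/π², where Ω = [−ρ, ρ] × [−ρ, ρ]. In particular σ²_stat / σ²_m1 = a. -/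
/-!
Write `a = 2k + 1`. For `y ∈ (-ρ, ρ)` the shift `y - 2nρ` lies in `[-aρ, aρ]` exactly when
`|n| ≤ k`, so every point of the open square is covered by `a` translates in the mobile case
and by `a²` translates in the static case. The boundary of `Ω` is null, hence the two sums are
a.e. the constants `a` and `a²`, and integrating over `Ω`, of area `4ρ²`, gives the variances.
-/

open MeasureTheory Real Set

lemma setIntegral_Icc_prod_Icc_of_eqOn_Ioo {a b c d C : ℝ} {f : ℝ × ℝ → ℝ} (hab : a ≤ b)
    (hcd : c ≤ d) (hf : EqOn f (fun _ ↦ C) (Ioo a b ×ˢ Ioo c d)) :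
    ∫ ω in Icc a b ×ˢ Icc c d, f ω = (b - a) * (d - c) * C := by
  rw [Measure.volume_eq_prod,
    setIntegral_congr_set (Measure.set_prod_ae_eq Ioo_ae_eq_Icc Ioo_ae_eq_Icc).symm,
    setIntegral_congr_fun (measurableSet_Ioo.prod measurableSet_Ioo) hf, setIntegral_const,
    smul_eq_mul, measureReal_def, Measure.prod_prod, Real.volume_Ioo,
    Real.volume_Ioo, ENNReal.toReal_mul, ENNReal.toReal_ofReal (sub_nonneg.2 hab),
    ENNReal.toReal_ofReal (sub_nonneg.2 hcd)]

lemma tsum_ite_eq_card {ι : Type*} (p : ι → Prop) [DecidablePred p] (s : Finset ι)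
    (hs : ∀ i, p i ↔ i ∈ s) : ∑' i, (if p i then (1 : ℝ) else 0) = s.card := by
  rw [tsum_eq_sum (s := s) fun i hi ↦ if_neg ((hs i).not.2 hi), Finset.sum_boole,
    Finset.filter_true_of_mem fun i hi ↦ (hs i).2 hi]

lemma abs_sub_two_mul_int_mul_le_odd_mul_iff {ρ y : ℝ} (hy : |y| < ρ) (k : ℕ) (n : ℤ) :
    |y - 2 * n * ρ| ≤ ((2 * k + 1 : ℕ) : ℝ) * ρ ↔ n ∈ Finset.Icc (-(k : ℤ)) k := by
  have hρ : 0 < ρ := (abs_nonneg y).trans_lt hy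
  rw [abs_lt] at hy
  rw [abs_le, Finset.mem_Icc]
  push_cast
  constructor
  · rintro ⟨hlow, hupp⟩
    have hn_gt : (-(k : ℝ) - 1) < n := by nlinarith
    have hn_lt : (n : ℝ) < k + 1 := by nlinarith
    constructor
    · have : -(k : ℤ) - 1 < n := by exact_mod_cast hn_gt
      omega
    · have : n < (k : ℤ) + 1 := by exact_mod_cast hn_lt
      omega
  · rintro ⟨hlow, hupp⟩
    have hlow' : -(k : ℝ) ≤ n := by exact_mod_cast hlow
    have hupp' : (n : ℝ) ≤ k := by exact_mod_cast hupp
    constructor <;> nlinarith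

theorem variance_ratio_indicator_noise_general (ρ : ℝ) (hρ : 0 < ρ) (a : ℕ) (ha : Odd a)
    (Sν : ℝ × ℝ → ℝ)
    (hSν : ∀ ω : ℝ × ℝ, Sν ω = if |ω.1| ≤ (a : ℝ) * ρ ∧ |ω.2| ≤ (a : ℝ) * ρ then 1 else 0) :
    (1 / (4 * π ^ 2)) * (∫ ω in (Set.Icc (-ρ) ρ ×ˢ Set.Icc (-ρ) ρ),
        ∑' n : ℤ × ℤ, Sν (ω.1 - 2 * n.1 * ρ, ω.2 - 2 * n.2 * ρ)) = ρ ^ 2 * (a : ℝ) ^ 2 / π ^ 2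
    ∧ (1 / (4 * π ^ 2)) * (∫ ω in (Set.Icc (-ρ) ρ ×ˢ Set.Icc (-ρ) ρ),
        ∑' n : ℤ, Sν (ω.1, ω.2 - 2 * n * ρ)) = ρ ^ 2 * (a : ℝ) / π ^ 2
    ∧ (ρ ^ 2 * (a : ℝ) ^ 2 / π ^ 2) / (ρ ^ 2 * (a : ℝ) / π ^ 2) = (a : ℝ) := by
  obtain ⟨k, rfl⟩ := ha
  have hcover := fun (y : ℝ) (hy : |y| < ρ) ↦ abs_sub_two_mul_int_mul_le_odd_mul_iff hy k
  have hcard : (Finset.Icc (-(k : ℤ)) k).card = 2 * k + 1 := by rw [Int.card_Icc]; omega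
  have hstatic : EqOn (fun ω : ℝ × ℝ ↦ ∑' n : ℤ × ℤ, Sν (ω.1 - 2 * n.1 * ρ, ω.2 - 2 * n.2 * ρ))
      (fun _ ↦ ((2 * k + 1 : ℕ) : ℝ) ^ 2) (Ioo (-ρ) ρ ×ˢ Ioo (-ρ) ρ) := by
    rintro ω ⟨hx, hy⟩
    simp only [hSν]
    rw [tsum_ite_eq_card _ (Finset.Icc (-(k : ℤ)) k ×ˢ Finset.Icc (-(k : ℤ)) k) fun n ↦ by
      rw [Finset.mem_product, hcover ω.1 (abs_lt.2 hx), hcover ω.2 (abs_lt.2 hy)],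
      Finset.card_product, hcard]
    push_cast; ring
  have hmobile : EqOn (fun ω : ℝ × ℝ ↦ ∑' n : ℤ, Sν (ω.1, ω.2 - 2 * n * ρ))
      (fun _ ↦ ((2 * k + 1 : ℕ) : ℝ)) (Ioo (-ρ) ρ ×ˢ Ioo (-ρ) ρ) := by
    rintro ω ⟨hx, hy⟩
    have hx' : |ω.1| ≤ ((2 * k + 1 : ℕ) : ℝ) * ρ := by
      have : (1 : ℝ) ≤ ((2 * k + 1 : ℕ) : ℝ) := by norm_cast; omega
      nlinarith [abs_lt.2 hx]
    simp only [hSν, hx', true_and]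
    rw [tsum_ite_eq_card _ _ (hcover ω.2 (abs_lt.2 hy)), hcard]
  refine ⟨?_, ?_, ?_⟩
  · rw [setIntegral_Icc_prod_Icc_of_eqOn_Ioo (by linarith) (by linarith) hstatic]
    field_simp; ring
  · rw [setIntegral_Icc_prod_Icc_of_eqOn_Ioo (by linarith) (by linarith) hmobile]
    field_simp; ring
  · field_simp

/-- Proposition 1: for noise spectral density equal to the indicator of
`[−aρ,aρ]²` with `a` a positive odd integer, the static-sampling noise variance equals
`ρ²a²/π²`, the mobile-sampling noise variance equals `ρ²a/π²`, and their ratio is `a`. -/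
theorem variance_ratio_indicator_noise (ρ : ℝ) (hρ : 0 < ρ) (a : ℕ) (ha : Odd a)
    (hapos : 0 < a)
    (Sν : ℝ × ℝ → ℝ)
    (hSν : ∀ ω : ℝ × ℝ, Sν ω = if |ω.1| ≤ (a : ℝ) * ρ ∧ |ω.2| ≤ (a : ℝ) * ρ then 1 else 0) :
    (1 / (4 * π ^ 2)) * (∫ ω in (Set.Icc (-ρ) ρ ×ˢ Set.Icc (-ρ) ρ),
        ∑' n : ℤ × ℤ, Sν (ω.1 - 2 * n.1 * ρ, ω.2 - 2 * n.2 * ρ)) = ρ ^ 2 * (a : ℝ) ^ 2 / π ^ 2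
    ∧ (1 / (4 * π ^ 2)) * (∫ ω in (Set.Icc (-ρ) ρ ×ˢ Set.Icc (-ρ) ρ),
        ∑' n : ℤ, Sν (ω.1, ω.2 - 2 * n * ρ)) = ρ ^ 2 * (a : ℝ) / π ^ 2
    ∧ (ρ ^ 2 * (a : ℝ) ^ 2 / π ^ 2) / (ρ ^ 2 * (a : ℝ) / π ^ 2) = (a : ℝ) :=
  variance_ratio_indicator_noise_general ρ hρ a ha Sν hSν
end

section
/- Under the assumptions of the previous proposition but for arbitrary real a ≥ 1, the static sampling noise variance σ²_stat grows as Θ(a²) and the mobile sampling noise variance σ²_m1 grows as Θ(a) as a → ∞. -/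
open MeasureTheory Real

/-!
The periodization of the indicator of `[-aρ, aρ]²` over the lattice `2ρℤ²` factors into two
one-dimensional counts, each the number of integers in an interval of length `a`, hence between
`a / 2` and `2a` once `a ≥ 1`. The static variance integrates the product of two counts over the
square `[-ρ, ρ]²`; in the mobile variance the first coordinate of the square stays inside the
band, so only one count survives. This gives the orders `a²` and `a`.
-/

lemma Int.card_Icc_ceil_floor_mem_Ioc {l u : ℝ} (h : l ≤ u) :
    ((Finset.Icc ⌈l⌉ ⌊u⌋).card : ℝ) ∈ Set.Ioc (u - l - 1) (u - l + 1) := by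
  have hle : ⌈l⌉ ≤ ⌊u⌋ + 1 := (Int.ceil_mono h).trans (Int.ceil_le_floor_add_one u)
  have hcard : ((Finset.Icc ⌈l⌉ ⌊u⌋).card : ℝ) = ⌊u⌋ + 1 - ⌈l⌉ := by
    rw [Int.card_Icc, ← Int.cast_natCast, Int.toNat_of_nonneg (by omega)]
    push_cast; ring
  rw [hcard]
  constructor
  · linarith [Int.ceil_lt_add_one l, Int.lt_floor_add_one u]
  · linarith [Int.le_ceil l, Int.floor_le u]

lemma Int.card_Icc_ceil_floor_mem_Icc {l u : ℝ} (h : 1 ≤ u - l) :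
    ((Finset.Icc ⌈l⌉ ⌊u⌋).card : ℝ) ∈ Set.Icc ((u - l) / 2) (2 * (u - l)) := by
  obtain ⟨hlower, hupper⟩ := card_Icc_ceil_floor_mem_Ioc (by linarith : l ≤ u)
  have hpos : (1 : ℝ) ≤ (Finset.Icc ⌈l⌉ ⌊u⌋).card := by
    exact_mod_cast Nat.one_le_iff_ne_zero.mpr fun h0 => by
      rw [h0, Nat.cast_zero] at hlower; linarith
  constructor
  · rcases le_or_gt (u - l) 2 with h2 | h2 <;> linarith
  · linarith

lemma setIntegral_mem_Icc_of_mem_Icc {X : Type*} [MeasurableSpace X] {μ : Measure X}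
    {s : Set X} {f : X → ℝ} {c C : ℝ} (hs : MeasurableSet s) (hμs : μ s ≠ ⊤)
    (hf : AEStronglyMeasurable f (μ.restrict s)) (hbound : ∀ x ∈ s, f x ∈ Set.Icc c C) :
    ∫ x in s, f x ∂μ ∈ Set.Icc (c * μ.real s) (C * μ.real s) := by
  have hint : IntegrableOn f s μ := by
    refine ⟨hf, .restrict_of_bounded (C := max |c| |C|) hμs.lt_top ?_⟩
    filter_upwards [ae_restrict_mem hs] with x hx
    obtain ⟨h₁, h₂⟩ := hbound x hx
    exact abs_le_max_abs_abs h₁ h₂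
  refine ⟨setIntegral_ge_of_const_le_real hs hμs (fun x hx => (hbound x hx).1) hint, ?_⟩
  calc ∫ x in s, f x ∂μ ≤ ∫ _ in s, C ∂μ :=
        setIntegral_mono_on hint (integrableOn_const hμs) hs fun x hx => (hbound x hx).2
    _ = C * μ.real s := by rw [setIntegral_const, smul_eq_mul, mul_comm]

lemma setIntegral_square_mem_Icc_of_mem_Icc {ρ : ℝ} (hρ : 0 < ρ) {f : ℝ × ℝ → ℝ} {c C : ℝ}
    (hf : Measurable f) (hbound : ∀ x, f x ∈ Set.Icc c C) :
    ∫ ω in Set.Icc (-ρ) ρ ×ˢ Set.Icc (-ρ) ρ, f ω ∈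
      Set.Icc (4 * ρ ^ 2 * c) (4 * ρ ^ 2 * C) := by
  have hvol : volume.real (Set.Icc (-ρ) ρ ×ˢ Set.Icc (-ρ) ρ) = 4 * ρ ^ 2 := by
    rw [Measure.volume_eq_prod, measureReal_prod_prod, Real.volume_real_Icc_of_le (by linarith)]
    ring
  have := setIntegral_mem_Icc_of_mem_Icc (s := Set.Icc (-ρ) ρ ×ˢ Set.Icc (-ρ) ρ)
    (measurableSet_Icc.prod measurableSet_Icc)
    ((isCompact_Icc.prod isCompact_Icc).measure_lt_top (μ := volume)).ne
    hf.aestronglyMeasurable fun x _ => hbound x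
  rwa [hvol, mul_comm c, mul_comm C] at this

section Aliasing

variable {ρ : ℝ}

lemma abs_sub_two_mul_le_iff_mem_Icc (hρ : 0 < ρ) (a t : ℝ) (n : ℤ) :
    |t - 2 * n * ρ| ≤ a * ρ ↔
      n ∈ Finset.Icc ⌈(t - a * ρ) / (2 * ρ)⌉ ⌊(t + a * ρ) / (2 * ρ)⌋ := by
  rw [Finset.mem_Icc, Int.ceil_le, Int.le_floor, div_le_iff₀ (by positivity),
    le_div_iff₀ (by positivity), abs_le]
  constructor <;> rintro ⟨h₁, h₂⟩ <;> constructor <;> linarith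

/-- `aliasCount ρ a ω.1 * aliasCount ρ a ω.2` is the periodization `∑ₙ S_ν(ω - 2nρ)` of the
indicator `S_ν` of `[-aρ, aρ]²`. -/
noncomputable def aliasCount (ρ a t : ℝ) : ℝ :=
  ∑' n : ℤ, if |t - 2 * n * ρ| ≤ a * ρ then 1 else 0

lemma summable_norm_ite_abs_sub_two_mul_le (hρ : 0 < ρ) (a t : ℝ) :
    Summable fun n : ℤ => ‖if |t - 2 * n * ρ| ≤ a * ρ then (1 : ℝ) else 0‖ :=
  summable_of_ne_finset_zero fun n hn => by
    rw [if_neg (mt (abs_sub_two_mul_le_iff_mem_Icc hρ a t n).mp hn), norm_zero]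

lemma aliasCount_eq_card (hρ : 0 < ρ) (a t : ℝ) :
    aliasCount ρ a t =
      (Finset.Icc ⌈(t - a * ρ) / (2 * ρ)⌉ ⌊(t + a * ρ) / (2 * ρ)⌋).card := by
  simp_rw [aliasCount, abs_sub_two_mul_le_iff_mem_Icc hρ]
  rw [tsum_eq_sum fun n hn => if_neg hn, Finset.sum_boole, Finset.filter_mem_eq_inter,
    Finset.inter_self]

lemma measurable_aliasCount (hρ : 0 < ρ) (a : ℝ) : Measurable (aliasCount ρ a) := by
  rw [funext (aliasCount_eq_card hρ a)]
  have hl : Measurable fun t : ℝ => ⌈(t - a * ρ) / (2 * ρ)⌉ :=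
    Int.measurable_ceil.comp (by fun_prop)
  have hu : Measurable fun t : ℝ => ⌊(t + a * ρ) / (2 * ρ)⌋ :=
    Int.measurable_floor.comp (by fun_prop)
  exact (measurable_of_countable fun p : ℤ × ℤ => ((Finset.Icc p.1 p.2).card : ℝ)).comp
    (f := fun t => (⌈(t - a * ρ) / (2 * ρ)⌉, ⌊(t + a * ρ) / (2 * ρ)⌋)) (hl.prodMk hu)

lemma aliasCount_mem_Icc (hρ : 0 < ρ) {a : ℝ} (ha : 1 ≤ a) (t : ℝ) :
    aliasCount ρ a t ∈ Set.Icc (a / 2) (2 * a) := by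
  have hlen : (t + a * ρ) / (2 * ρ) - (t - a * ρ) / (2 * ρ) = a := by
    field_simp; ring
  have := Int.card_Icc_ceil_floor_mem_Icc (hlen.symm ▸ ha)
  rwa [hlen, ← aliasCount_eq_card hρ] at this

lemma aliasCount_mul_aliasCount_mem_Icc (hρ : 0 < ρ) {a : ℝ} (ha : 1 ≤ a) (x y : ℝ) :
    aliasCount ρ a x * aliasCount ρ a y ∈ Set.Icc (a / 2 * (a / 2)) (2 * a * (2 * a)) := by
  obtain ⟨hx₁, hx₂⟩ := aliasCount_mem_Icc hρ ha x
  obtain ⟨hy₁, hy₂⟩ := aliasCount_mem_Icc hρ ha y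
  exact ⟨mul_le_mul hx₁ hy₁ (by positivity) (by linarith),
    mul_le_mul hx₂ hy₂ (by linarith) (by linarith)⟩

lemma tsum_ite_abs_sub_le_and_abs_sub_le (hρ : 0 < ρ) (a x y : ℝ) :
    ∑' n : ℤ × ℤ, (if |x - 2 * n.1 * ρ| ≤ a * ρ ∧ |y - 2 * n.2 * ρ| ≤ a * ρ then 1 else 0 : ℝ) =
      aliasCount ρ a x * aliasCount ρ a y := by
  rw [aliasCount, aliasCount, tsum_mul_tsum_of_summable_norm
    (summable_norm_ite_abs_sub_two_mul_le hρ a x) (summable_norm_ite_abs_sub_two_mul_le hρ a y)]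
  simp_rw [ite_zero_mul_ite_zero, one_mul]

end Aliasing

/-- with noise spectral density equal to the indicator of `[−aρ,aρ]²` for
arbitrary real `a ≥ 1`, the static sampling noise variance grows as `Θ(a²)` and the mobile
sampling noise variance grows as `Θ(a)`. -/
theorem variance_growth_orders (ρ : ℝ) (hρ : 0 < ρ)
    (Sν : ℝ → ℝ × ℝ → ℝ)
    (hSν : ∀ (a : ℝ) (ω : ℝ × ℝ),
      Sν a ω = if |ω.1| ≤ a * ρ ∧ |ω.2| ≤ a * ρ then 1 else 0) :
    ∃ c₁ C₁ c₂ C₂ : ℝ, 0 < c₁ ∧ 0 < C₁ ∧ 0 < c₂ ∧ 0 < C₂ ∧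
      ∀ a : ℝ, 1 ≤ a →
        (c₁ * a ^ 2 ≤ (1 / (4 * π ^ 2)) * (∫ ω in (Set.Icc (-ρ) ρ ×ˢ Set.Icc (-ρ) ρ),
            ∑' n : ℤ × ℤ, Sν a (ω.1 - 2 * n.1 * ρ, ω.2 - 2 * n.2 * ρ)) ∧
          (1 / (4 * π ^ 2)) * (∫ ω in (Set.Icc (-ρ) ρ ×ˢ Set.Icc (-ρ) ρ),
            ∑' n : ℤ × ℤ, Sν a (ω.1 - 2 * n.1 * ρ, ω.2 - 2 * n.2 * ρ)) ≤ C₁ * a ^ 2) ∧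
        (c₂ * a ≤ (1 / (4 * π ^ 2)) * (∫ ω in (Set.Icc (-ρ) ρ ×ˢ Set.Icc (-ρ) ρ),
            ∑' n : ℤ, Sν a (ω.1, ω.2 - 2 * n * ρ)) ∧
          (1 / (4 * π ^ 2)) * (∫ ω in (Set.Icc (-ρ) ρ ×ˢ Set.Icc (-ρ) ρ),
            ∑' n : ℤ, Sν a (ω.1, ω.2 - 2 * n * ρ)) ≤ C₂ * a) := by
  set K := 1 / (4 * π ^ 2)
  have hK : 0 < K := by positivity
  refine ⟨K * ρ ^ 2, K * (16 * ρ ^ 2), K * (2 * ρ ^ 2), K * (8 * ρ ^ 2),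
    by positivity, by positivity, by positivity, by positivity, fun a ha => ?_⟩
  have hstatic : (∫ ω in Set.Icc (-ρ) ρ ×ˢ Set.Icc (-ρ) ρ,
      ∑' n : ℤ × ℤ, Sν a (ω.1 - 2 * n.1 * ρ, ω.2 - 2 * n.2 * ρ)) =
      ∫ ω in Set.Icc (-ρ) ρ ×ˢ Set.Icc (-ρ) ρ, aliasCount ρ a ω.1 * aliasCount ρ a ω.2 := by
    simp_rw [hSν, tsum_ite_abs_sub_le_and_abs_sub_le hρ]
  have hmobile : (∫ ω in Set.Icc (-ρ) ρ ×ˢ Set.Icc (-ρ) ρ,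
      ∑' n : ℤ, Sν a (ω.1, ω.2 - 2 * n * ρ)) =
      ∫ ω in Set.Icc (-ρ) ρ ×ˢ Set.Icc (-ρ) ρ, aliasCount ρ a ω.2 := by
    refine setIntegral_congr_fun (measurableSet_Icc.prod measurableSet_Icc) fun ω hω => ?_
    have hω₁ : |ω.1| ≤ a * ρ := (abs_le.mpr hω.1).trans (by nlinarith)
    simp only [hSν, hω₁, true_and, aliasCount]
  obtain ⟨hs₁, hs₂⟩ := setIntegral_square_mem_Icc_of_mem_Icc hρ
    (f := fun ω => aliasCount ρ a ω.1 * aliasCount ρ a ω.2)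
    (((measurable_aliasCount hρ a).comp measurable_fst).mul
      ((measurable_aliasCount hρ a).comp measurable_snd))
    fun ω => aliasCount_mul_aliasCount_mem_Icc hρ ha ω.1 ω.2
  obtain ⟨hm₁, hm₂⟩ := setIntegral_square_mem_Icc_of_mem_Icc hρ
    (f := fun ω => aliasCount ρ a ω.2) ((measurable_aliasCount hρ a).comp measurable_snd)
    fun ω => aliasCount_mem_Icc hρ ha ω.2
  rw [hstatic, hmobile]
  refine ⟨⟨?_, ?_⟩, ?_, ?_⟩ <;> rw [mul_assoc] <;> gcongr <;> linarith
end

section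
/- With the box filter of half-width Δ_b and sampling interval Δ_x, the noise variance σ²_{m2}(Δ_b, Δ_x) given by (κ²Δ_b²/4π⁴) ∫_Ω Σ_{n∈ℤ²} S_ν(ω − (2n_xπ/Δ_x, 2n_yρ)) sinc²((Δ_b/π)(ω_x − 2πn_x/Δ_x)) dω satisfies lim_{Δ_b→0} lim_{Δ_x→0} σ²_{m2} = σ²_{m1}, where σ²_{m1} = (1/4π²) ∫_Ω Σ_{n∈ℤ} S_ν(ω − (0, 2nρ)) dω is the ideal-low-pass-filter noise variance. -/
open MeasureTheory Real Filter Topology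

/-- `sinc x = sin(πx)/(πx)`, with `sinc 0 = 1`. -/
noncomputable def sinc (x : ℝ) : ℝ := if x = 0 then 1 else Real.sin (π * x) / (π * x)

/-!
Write `S = ofReal ∘ Sν` and `w_Δb x = sinc (Δb x / π)²`. Every point of the plane lies in at most
four translates of `Ω` by a lattice whose periods are at least `2ρ`, so the lattice sums of `∫_Ω S`
are at most `4 ∫ S`. Once `2π/Δx ≥ 2ρ`, the terms with `n_x ≠ 0` only see `w_Δb` at distance at
least `2π/Δx - ρ` from the origin, where `w_Δb` tends to zero; hence as `Δx → 0` the lattice sum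
tends to its `n_x = 0` slice `∫_Ω Σₙ S(ω - (0, 2nρ)) w_Δb(ω₁)`. As `Δb → 0`, `w_Δb → 1` boundedly,
so dominated convergence gives `∫_Ω Σₙ S(ω - (0, 2nρ))`, while the normalisation
`κ² Δb² / (4π⁴) = ρ / (2π² ∫_{-ρ}^{ρ} w_Δb)` tends to `1 / (4π²)`.
-/

open Set
open scoped ENNReal

lemma sinc_eq_real_sinc (x : ℝ) : _root_.sinc x = Real.sinc (π * x) := by
  simp [_root_.sinc, Real.sinc, pi_ne_zero]

@[fun_prop]
lemma continuous_sinc : Continuous _root_.sinc := by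
  rw [funext sinc_eq_real_sinc]
  exact Real.continuous_sinc.comp (continuous_const_mul π)

lemma sinc_zero : _root_.sinc 0 = 1 := by simp [_root_.sinc]

lemma sinc_sq_le_one (x : ℝ) : _root_.sinc x ^ 2 ≤ 1 := by
  rw [sinc_eq_real_sinc, sq_le_one_iff_abs_le_one]
  exact Real.abs_sinc_le_one _

lemma Real.abs_sinc_le_inv_abs {x : ℝ} (hx : x ≠ 0) : |Real.sinc x| ≤ |x|⁻¹ := by
  rw [Real.sinc_of_ne_zero hx, abs_div, div_eq_mul_inv]
  exact mul_le_of_le_one_left (by positivity) (abs_sin_le_one x)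

lemma Real.tendsto_sinc_cocompact : Tendsto Real.sinc (cocompact ℝ) (𝓝 0) := by
  have hinv : Tendsto (fun x : ℝ => |x|⁻¹) (cocompact ℝ) (𝓝 0) :=
    tendsto_inv_atTop_zero.comp tendsto_norm_cocompact_atTop
  refine squeeze_zero_norm' ?_ hinv
  filter_upwards [(hasBasis_cocompact.mem_of_mem isCompact_singleton : {(0 : ℝ)}ᶜ ∈ _)] with x hx
  exact Real.abs_sinc_le_inv_abs hx

lemma tendsto_sinc_mul_cocompact {c : ℝ} (hc : c ≠ 0) :
    Tendsto (fun x => _root_.sinc (c * x)) (cocompact ℝ) (𝓝 0) := by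
  simp_rw [sinc_eq_real_sinc, ← mul_assoc]
  exact Real.tendsto_sinc_cocompact.comp
    (Homeomorph.mulLeft₀ (π * c) (mul_ne_zero pi_ne_zero hc)).map_cocompact.le

lemma tsum_indicator_Icc_add_int_mul_le_two {c d a : ℝ} (ha : 0 < a) (hcd : d - c ≤ a)
    (x : ℝ) : ∑' n : ℤ, (Icc c d).indicator (1 : ℝ → ℝ≥0∞) (x + n * a) ≤ 2 := by
  -- `k` is the first index with `c ≤ x + k a`; as `d - c ≤ a`, only `k`, `k + 1` can hit `[c, d]`.
  set k : ℤ := ⌈(c - x) / a⌉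
  have hsupp : ∀ n ∉ ({k, k + 1} : Finset ℤ),
      (Icc c d).indicator (1 : ℝ → ℝ≥0∞) (x + n * a) = 0 := by
    intro n hn
    rw [indicator_of_notMem]
    rintro ⟨hc, hd⟩
    apply hn
    have hk : k ≤ n := Int.ceil_le.mpr <| by rw [div_le_iff₀ ha]; linarith
    have hck : c - x ≤ k * a := (div_le_iff₀ ha).mp (Int.le_ceil _)
    have hnk : (n : ℝ) - 1 ≤ k := le_of_mul_le_mul_right (by linarith) ha
    have : n ≤ k + 1 := by exact_mod_cast (by linarith : (n : ℝ) ≤ k + 1)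
    simp only [Finset.mem_insert, Finset.mem_singleton]
    omega
  rw [tsum_eq_sum hsupp]
  calc ∑ n ∈ ({k, k + 1} : Finset ℤ), (Icc c d).indicator (1 : ℝ → ℝ≥0∞) (x + n * a)
      ≤ ∑ _n ∈ ({k, k + 1} : Finset ℤ), 1 :=
        Finset.sum_le_sum fun n _ => indicator_le_self' (fun _ _ => zero_le_one) _
    _ ≤ 2 := by
        rw [Finset.sum_const, nsmul_one]
        exact_mod_cast Finset.card_le_two

section Tiling

variable {G : Type*} [MeasurableSpace G] [AddGroup G] [MeasurableAdd G] {μ : Measure G}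
  [μ.IsAddRightInvariant]

lemma setLIntegral_comp_sub_eq {f : G → ℝ≥0∞} {B : Set G} (hB : MeasurableSet B) (v : G) :
    ∫⁻ ω in B, f (ω - v) ∂μ = ∫⁻ ω, B.indicator 1 (ω + v) * f ω ∂μ := by
  rw [← lintegral_indicator hB, ← lintegral_add_right_eq_self _ v]
  congr 1 with ω
  by_cases h : ω + v ∈ B <;> simp [h]

lemma tsum_setLIntegral_comp_sub_le {ι : Type*} [Countable ι] {f : G → ℝ≥0∞}
    (hf : AEMeasurable f μ) {B : Set G} (hB : MeasurableSet B) (v : ι → G) {M : ℝ≥0∞}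
    (hM : ∀ ω, ∑' n, B.indicator 1 (ω + v n) ≤ M) :
    ∑' n, ∫⁻ ω in B, f (ω - v n) ∂μ ≤ M * ∫⁻ ω, f ω ∂μ := by
  have hind : ∀ n, Measurable fun ω => B.indicator (1 : G → ℝ≥0∞) (ω + v n) :=
    fun n => (measurable_const.indicator hB).comp (measurable_add_const (v n))
  calc ∑' n, ∫⁻ ω in B, f (ω - v n) ∂μ
      = ∫⁻ ω, (∑' n, B.indicator 1 (ω + v n)) * f ω ∂μ := by
        simp_rw [setLIntegral_comp_sub_eq (f := f) hB, ← ENNReal.tsum_mul_right]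
        exact (lintegral_tsum fun n => (hind n).aemeasurable.mul hf).symm
    _ ≤ ∫⁻ ω, M * f ω ∂μ := lintegral_mono fun ω => mul_le_mul_left (hM ω) _
    _ = M * ∫⁻ ω, f ω ∂μ := lintegral_const_mul'' M hf

end Tiling

lemma tsum_setLIntegral_rect_lattice_le {f : ℝ × ℝ → ℝ≥0∞} (hf : AEMeasurable f)
    {c₁ d₁ c₂ d₂ a b : ℝ} (ha : 0 < a) (hb : 0 < b) (ha' : d₁ - c₁ ≤ a) (hb' : d₂ - c₂ ≤ b) :
    ∑' n : ℤ × ℤ, ∫⁻ ω in Icc c₁ d₁ ×ˢ Icc c₂ d₂, f (ω.1 - n.1 * a, ω.2 - n.2 * b)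
      ≤ 4 * ∫⁻ ω, f ω := by
  refine tsum_setLIntegral_comp_sub_le hf (measurableSet_Icc.prod measurableSet_Icc)
    (fun n : ℤ × ℤ => (n.1 * a, n.2 * b)) fun ω => ?_
  calc ∑' n : ℤ × ℤ, (Icc c₁ d₁ ×ˢ Icc c₂ d₂).indicator 1 (ω + (n.1 * a, n.2 * b))
      = (∑' n₁ : ℤ, (Icc c₁ d₁).indicator 1 (ω.1 + n₁ * a)) *
          ∑' n₂ : ℤ, (Icc c₂ d₂).indicator 1 (ω.2 + n₂ * b) := by
        rw [ENNReal.tsum_prod', ← ENNReal.tsum_mul_right]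
        congr 1 with n₁
        rw [← ENNReal.tsum_mul_left]
        congr 1 with n₂
        exact indicator_prod_one
    _ ≤ 2 * 2 := mul_le_mul' (tsum_indicator_Icc_add_int_mul_le_two ha ha' _)
        (tsum_indicator_Icc_add_int_mul_le_two hb hb' _)
    _ = 4 := by norm_num

lemma tendsto_iSup_norm_ge_of_tendsto_cocompact {E : Type*} [NormedAddCommGroup E]
    [ProperSpace E] {w : E → ℝ≥0∞} (hw : Tendsto w (cocompact E) (𝓝 0)) :
    Tendsto (fun R : ℝ => ⨆ (x : E) (_ : R ≤ ‖x‖), w x) atTop (𝓝 0) := by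
  rw [ENNReal.tendsto_nhds_zero]
  intro ε hε
  rw [← Metric.cobounded_eq_cocompact, ← comap_norm_atTop] at hw
  obtain ⟨R, -, hR⟩ := (atTop_basis.comap norm).eventually_iff.mp
    (hw.eventually (eventually_le_nhds hε))
  filter_upwards [eventually_ge_atTop R] with R' hR'
  exact iSup₂_le fun x hx => hR (hR'.trans hx)

lemma sub_le_abs_sub_int_mul {ρ a x : ℝ} (ha : 0 ≤ a) (hx : x ∈ Icc (-ρ) ρ) {n : ℤ}
    (hn : n ≠ 0) : a - ρ ≤ |x - n * a| := by
  have hn1 : (1 : ℝ) ≤ |(n : ℝ)| := by exact_mod_cast Int.one_le_abs hn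
  have hfar := abs_sub_abs_le_abs_sub (n * a) x
  rw [abs_mul, abs_of_nonneg ha, abs_sub_comm] at hfar
  nlinarith [abs_le.mpr hx]

section SquareLattice

variable {f : ℝ × ℝ → ℝ≥0∞} (hf : AEMeasurable f) {w : ℝ → ℝ≥0∞} {ρ b : ℝ}
include hf

lemma tsum_ite_tsum_setLIntegral_lattice_le {a : ℝ} (ha : 0 < a) (hρa : 2 * ρ ≤ a)
    (hb : 0 < b) (hρb : 2 * ρ ≤ b) :
    ∑' n₁ : ℤ, (if n₁ = 0 then 0 else ∑' n₂ : ℤ, ∫⁻ ω in Icc (-ρ) ρ ×ˢ Icc (-ρ) ρ,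
        f (ω.1 - n₁ * a, ω.2 - n₂ * b) * w (ω.1 - n₁ * a))
      ≤ (⨆ (x : ℝ) (_ : a - ρ ≤ |x|), w x) * (4 * ∫⁻ ω, f ω) := by
  set M := ⨆ (x : ℝ) (_ : a - ρ ≤ |x|), w x
  have hshift : ∀ n : ℤ × ℤ, AEMeasurable (fun ω : ℝ × ℝ => f (ω.1 - n.1 * a, ω.2 - n.2 * b))
      (volume.restrict (Icc (-ρ) ρ ×ˢ Icc (-ρ) ρ)) := fun n =>
    (hf.comp_quasiMeasurePreserving (measurePreserving_sub_right volume
      ((n.1 * a : ℝ), (n.2 * b : ℝ))).quasiMeasurePreserving).restrict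
  have hterm : ∀ n : ℤ × ℤ, n.1 ≠ 0 →
      ∫⁻ ω in Icc (-ρ) ρ ×ˢ Icc (-ρ) ρ, f (ω.1 - n.1 * a, ω.2 - n.2 * b) * w (ω.1 - n.1 * a)
        ≤ M * ∫⁻ ω in Icc (-ρ) ρ ×ˢ Icc (-ρ) ρ, f (ω.1 - n.1 * a, ω.2 - n.2 * b) := by
    intro n hn
    rw [← lintegral_const_mul'' M (hshift n)]
    refine setLIntegral_mono' (measurableSet_Icc.prod measurableSet_Icc) fun ω hω => ?_
    rw [mul_comm M]
    exact mul_le_mul_right (le_iSup₂ (f := fun x (_ : a - ρ ≤ |x|) => w x) (ω.1 - n.1 * a)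
      (sub_le_abs_sub_int_mul ha.le hω.1 hn)) _
  calc _ ≤ ∑' n₁ : ℤ, ∑' n₂ : ℤ, M * ∫⁻ ω in Icc (-ρ) ρ ×ˢ Icc (-ρ) ρ,
          f (ω.1 - n₁ * a, ω.2 - n₂ * b) := by
        refine ENNReal.tsum_le_tsum fun n₁ => ?_
        split_ifs with hn₁
        · exact zero_le
        · exact ENNReal.tsum_le_tsum fun n₂ => hterm (n₁, n₂) hn₁
    _ = M * ∑' n : ℤ × ℤ, ∫⁻ ω in Icc (-ρ) ρ ×ˢ Icc (-ρ) ρ,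
          f (ω.1 - n.1 * a, ω.2 - n.2 * b) := by
        rw [ENNReal.tsum_prod', ← ENNReal.tsum_mul_left]
        simp_rw [ENNReal.tsum_mul_left]
    _ ≤ M * (4 * ∫⁻ ω, f ω) :=
        mul_le_mul_right (tsum_setLIntegral_rect_lattice_le hf ha hb (by linarith) (by linarith)) _

lemma tendsto_tsum_setLIntegral_lattice_mul (hfI : ∫⁻ ω, f ω ≠ ⊤)
    (hw : Tendsto w (cocompact ℝ) (𝓝 0)) (hb : 0 < b) (hρb : 2 * ρ ≤ b) :
    Tendsto (fun a => ∑' n : ℤ × ℤ, ∫⁻ ω in Icc (-ρ) ρ ×ˢ Icc (-ρ) ρ,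
        f (ω.1 - n.1 * a, ω.2 - n.2 * b) * w (ω.1 - n.1 * a)) atTop
      (𝓝 (∑' n : ℤ, ∫⁻ ω in Icc (-ρ) ρ ×ˢ Icc (-ρ) ρ, f (ω.1, ω.2 - n * b) * w ω.1)) := by
  have hsplit : ∀ a, ∑' n : ℤ × ℤ, ∫⁻ ω in Icc (-ρ) ρ ×ˢ Icc (-ρ) ρ,
        f (ω.1 - n.1 * a, ω.2 - n.2 * b) * w (ω.1 - n.1 * a) =
      (∑' n : ℤ, ∫⁻ ω in Icc (-ρ) ρ ×ˢ Icc (-ρ) ρ, f (ω.1, ω.2 - n * b) * w ω.1) +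
        ∑' n₁ : ℤ, (if n₁ = 0 then 0 else ∑' n₂ : ℤ, ∫⁻ ω in Icc (-ρ) ρ ×ˢ Icc (-ρ) ρ,
          f (ω.1 - n₁ * a, ω.2 - n₂ * b) * w (ω.1 - n₁ * a)) := fun a => by
    rw [ENNReal.tsum_prod', ENNReal.tsum_eq_add_tsum_ite 0]
    simp only [Int.cast_zero, zero_mul, sub_zero]
  have hbound : Tendsto (fun a => (⨆ (x : ℝ) (_ : a - ρ ≤ |x|), w x) * (4 * ∫⁻ ω, f ω)) atTop
      (𝓝 0) := by
    simpa using ENNReal.Tendsto.mul_const ((tendsto_iSup_norm_ge_of_tendsto_cocompact hw).comp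
      (tendsto_atTop_add_const_right _ (-ρ) tendsto_id))
      (Or.inr (ENNReal.mul_ne_top ENNReal.ofNat_ne_top hfI))
  have htail := tendsto_of_tendsto_of_tendsto_of_le_of_le' tendsto_const_nhds hbound
    (Eventually.of_forall fun _ => zero_le)
    ((eventually_gt_atTop 0).and (eventually_ge_atTop (2 * ρ)) |>.mono fun a ha =>
      tsum_ite_tsum_setLIntegral_lattice_le hf ha.1 ha.2 hb hρb)
  simpa only [hsplit, add_zero] using htail.const_add
    (∑' n : ℤ, ∫⁻ ω in Icc (-ρ) ρ ×ˢ Icc (-ρ) ρ, f (ω.1, ω.2 - n * b) * w ω.1)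

end SquareLattice

lemma tsum_setLIntegral_square_shift_le {f : ℝ × ℝ → ℝ≥0∞} (hf : AEMeasurable f) {ρ b : ℝ}
    (hb : 0 < b) (hρb : 2 * ρ ≤ b) :
    ∑' n : ℤ, ∫⁻ ω in Icc (-ρ) ρ ×ˢ Icc (-ρ) ρ, f (ω.1, ω.2 - n * b) ≤ 4 * ∫⁻ ω, f ω := by
  have hlattice := tsum_setLIntegral_rect_lattice_le hf hb hb (c₁ := -ρ) (d₁ := ρ) (c₂ := -ρ)
    (d₂ := ρ) (by linarith) (by linarith)
  rw [ENNReal.tsum_prod'] at hlattice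
  simpa using (ENNReal.le_tsum 0).trans hlattice

lemma tendsto_tsum_lintegral_mul_of_tendsto_one {α β ι : Type*} [MeasurableSpace α]
    {μ : Measure α} [Countable ι] {l : Filter β} [l.IsCountablyGenerated]
    {g : ι → α → ℝ≥0∞} (hg : ∀ i, AEMeasurable (g i) μ) (hfin : ∑' i, ∫⁻ x, g i x ∂μ ≠ ⊤)
    {w : β → α → ℝ≥0∞} (hw : ∀ t, AEMeasurable (w t) μ) (hw1 : ∀ t x, w t x ≤ 1)
    (hlim : ∀ x, Tendsto (fun t => w t x) l (𝓝 1)) :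
    Tendsto (fun t => ∑' i, ∫⁻ x, g i x * w t x ∂μ) l (𝓝 (∑' i, ∫⁻ x, g i x ∂μ)) := by
  have hsum : ∀ t, ∑' i, ∫⁻ x, g i x * w t x ∂μ = ∫⁻ x, (∑' i, g i x) * w t x ∂μ := fun t => by
    simp_rw [← ENNReal.tsum_mul_right]
    exact (lintegral_tsum fun i => (hg i).mul (hw t)).symm
  rw [← lintegral_tsum hg] at hfin ⊢
  simp_rw [hsum]
  refine tendsto_lintegral_filter_of_dominated_convergence' (fun x => ∑' i, g i x)
    (Eventually.of_forall fun t => (AEMeasurable.tsum hg).mul (hw t))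
    (Eventually.of_forall fun t => ae_of_all _ fun x => mul_le_of_le_one_right' (hw1 t x)) hfin
    (ae_of_all _ fun x => ?_)
  simpa using ENNReal.Tendsto.const_mul (hlim x) (Or.inl one_ne_zero) (a := ∑' i, g i x)

lemma integral_tsum_eq_toReal_tsum_lintegral {α ι : Type*} [MeasurableSpace α] {μ : Measure α}
    [Countable ι] {f : ι → α → ℝ} (hf0 : ∀ i x, 0 ≤ f i x)
    (hf : ∀ i, AEStronglyMeasurable (f i) μ)
    (hfin : ∑' i, ∫⁻ x, ENNReal.ofReal (f i x) ∂μ ≠ ⊤) :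
    ∫ x, ∑' i, f i x ∂μ = (∑' i, ∫⁻ x, ENNReal.ofReal (f i x) ∂μ).toReal := by
  rw [integral_tsum hf (by simpa only [Real.enorm_of_nonneg (hf0 _ _)] using hfin),
    ENNReal.tsum_toReal_eq (ENNReal.ne_top_of_tsum_ne_top hfin)]
  exact tsum_congr fun i => integral_eq_lintegral_of_nonneg_ae (ae_of_all _ (hf0 i)) (hf i)

lemma tendsto_intervalIntegral_sinc_sq_mul (a b : ℝ) :
    Tendsto (fun t => ∫ x in a..b, _root_.sinc (t * x / π) ^ 2) (𝓝 0) (𝓝 (b - a)) := by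
  have hcont : Continuous fun t => ∫ x in a..b, _root_.sinc (t * x / π) ^ 2 :=
    intervalIntegral.continuous_parametric_intervalIntegral_of_continuous' (by fun_prop) a b
  simpa [_root_.sinc_zero] using hcont.tendsto 0

lemma tendsto_boxFilter_normalization {ρ : ℝ} (hρ : 0 < ρ) {κ : ℝ → ℝ}
    (hκ : ∀ Δb : ℝ, 0 < Δb → κ Δb = Real.sqrt (2 * ρ) *
      ((Δb ^ 2 / π ^ 2) * ∫ ω in (-ρ)..ρ, (_root_.sinc (Δb * ω / π)) ^ 2) ^ (-(1 / 2 : ℝ))) :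
    Tendsto (fun Δb => κ Δb ^ 2 * Δb ^ 2 / (4 * π ^ 4)) (𝓝[>] 0) (𝓝 (1 / (4 * π ^ 2))) := by
  have hκsq : ∀ Δb : ℝ, 0 < Δb → κ Δb ^ 2 * Δb ^ 2 / (4 * π ^ 4) =
      ρ / (2 * π ^ 2) * (∫ ω in (-ρ)..ρ, _root_.sinc (Δb * ω / π) ^ 2)⁻¹ := by
    intro Δb hΔb
    have hQ : 0 ≤ ∫ ω in (-ρ)..ρ, _root_.sinc (Δb * ω / π) ^ 2 :=
      intervalIntegral.integral_nonneg (by linarith) fun _ _ => sq_nonneg _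
    rw [hκ Δb hΔb, mul_pow, sq_sqrt (by linarith), ← rpow_natCast, ← rpow_mul (by positivity),
      show (-(1 / 2 : ℝ)) * ((2 : ℕ) : ℝ) = -1 by norm_num, rpow_neg_one, mul_inv, inv_div]
    field_simp
    ring
  have hlim := ((tendsto_intervalIntegral_sinc_sq_mul (-ρ) ρ).inv₀ (by linarith)).const_mul
    (ρ / (2 * π ^ 2))
  rw [show ρ / (2 * π ^ 2) * (ρ - -ρ)⁻¹ = 1 / (4 * π ^ 2) by field_simp; ring] at hlim
  exact (hlim.mono_left nhdsWithin_le_nhds).congr' <|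
    eventually_nhdsWithin_of_forall fun Δb hΔb => (hκsq Δb hΔb).symm

lemma measurePreserving_prodMk_sub_right (y : ℝ) :
    MeasurePreserving (fun ω : ℝ × ℝ => (ω.1, ω.2 - y)) :=
  (MeasurePreserving.id volume).prod (measurePreserving_sub_right volume y)

/-- The `n_x = 0` slice of the lattice sum in `σ²_{m2}`, with the filter weight `w` in place of
`sinc²`. -/
noncomputable def aliasedMass (ρ : ℝ) (Sν : ℝ × ℝ → ℝ) (w : ℝ → ℝ) : ℝ≥0∞ :=
  ∑' n : ℤ, ∫⁻ ω in Icc (-ρ) ρ ×ˢ Icc (-ρ) ρ,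
    ENNReal.ofReal (Sν (ω.1, ω.2 - n * (2 * ρ))) * ENNReal.ofReal (w ω.1)

section Spectrum

variable {ρ : ℝ} (hρ : 0 < ρ) {Sν : ℝ × ℝ → ℝ} (hint : Integrable Sν)
include hρ hint

lemma tsum_setLIntegral_aliased_ne_top :
    ∑' n : ℤ, ∫⁻ ω in Icc (-ρ) ρ ×ˢ Icc (-ρ) ρ, ENNReal.ofReal (Sν (ω.1, ω.2 - n * (2 * ρ)))
      ≠ ⊤ :=
  ne_top_of_le_ne_top (ENNReal.mul_ne_top ENNReal.ofNat_ne_top hint.lintegral_lt_top.ne)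
    (tsum_setLIntegral_square_shift_le hint.aemeasurable.ennreal_ofReal (by positivity) le_rfl)

lemma aliasedMass_ne_top {w : ℝ → ℝ} (hw1 : ∀ x, w x ≤ 1) : aliasedMass ρ Sν w ≠ ⊤ :=
  ne_top_of_le_ne_top (tsum_setLIntegral_aliased_ne_top hρ hint) <|
    ENNReal.tsum_le_tsum fun _ => lintegral_mono fun _ =>
      mul_le_of_le_one_right' (ENNReal.ofReal_le_one.mpr (hw1 _))

lemma tendsto_integral_tsum_lattice_mul (hnonneg : ∀ ω, 0 ≤ Sν ω) {w : ℝ → ℝ}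
    (hw0 : ∀ x, 0 ≤ w x) (hw1 : ∀ x, w x ≤ 1) (hwc : Continuous w)
    (hw : Tendsto w (cocompact ℝ) (𝓝 0)) :
    Tendsto (fun a => ∫ ω in Icc (-ρ) ρ ×ˢ Icc (-ρ) ρ, ∑' n : ℤ × ℤ,
        Sν (ω.1 - n.1 * a, ω.2 - n.2 * (2 * ρ)) * w (ω.1 - n.1 * a)) atTop
      (𝓝 (aliasedMass ρ Sν w).toReal) := by
  have hlim := tendsto_tsum_setLIntegral_lattice_mul hint.aemeasurable.ennreal_ofReal
    hint.lintegral_lt_top.ne (w := fun x => ENNReal.ofReal (w x))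
    (by simpa using ENNReal.tendsto_ofReal hw) (by positivity) le_rfl
  have hfin := aliasedMass_ne_top hρ hint hw1
  refine ((ENNReal.tendsto_toReal hfin).comp hlim).congr' ?_
  filter_upwards [hlim.eventually (gt_mem_nhds hfin.lt_top)] with a ha
  simp_rw [← ENNReal.ofReal_mul (hnonneg _)] at ha ⊢
  refine (integral_tsum_eq_toReal_tsum_lintegral (fun _ _ => mul_nonneg (hnonneg _) (hw0 _))
    (fun n => ?_) ha.ne).symm
  exact ((hint.aestronglyMeasurable.comp_quasiMeasurePreserving (measurePreserving_sub_right volume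
    ((n.1 * a : ℝ), (n.2 * (2 * ρ) : ℝ))).quasiMeasurePreserving).mul
    (hwc.comp (continuous_fst.sub continuous_const)).aestronglyMeasurable).restrict

lemma tendsto_toReal_aliasedMass {β : Type*} {l : Filter β} [l.IsCountablyGenerated]
    (hnonneg : ∀ ω, 0 ≤ Sν ω) {w : β → ℝ → ℝ} (hwc : ∀ t, Continuous (w t))
    (hw1 : ∀ t x, w t x ≤ 1) (hlim : ∀ x, Tendsto (fun t => w t x) l (𝓝 1)) :
    Tendsto (fun t => (aliasedMass ρ Sν (w t)).toReal) l
      (𝓝 (∫ ω in Icc (-ρ) ρ ×ˢ Icc (-ρ) ρ, ∑' n : ℤ, Sν (ω.1, ω.2 - n * (2 * ρ)))) := by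
  have hshift : ∀ n : ℤ, AEStronglyMeasurable (fun ω : ℝ × ℝ => Sν (ω.1, ω.2 - n * (2 * ρ)))
      (volume.restrict (Icc (-ρ) ρ ×ˢ Icc (-ρ) ρ)) := fun n =>
    (hint.aestronglyMeasurable.comp_quasiMeasurePreserving
      (measurePreserving_prodMk_sub_right _).quasiMeasurePreserving).restrict
  have hfin := tsum_setLIntegral_aliased_ne_top hρ hint
  rw [integral_tsum_eq_toReal_tsum_lintegral (fun _ _ => hnonneg _) hshift hfin]
  refine (ENNReal.tendsto_toReal hfin).comp (tendsto_tsum_lintegral_mul_of_tendsto_one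
    (fun n => (hshift n).aemeasurable.ennreal_ofReal) hfin
    (fun t => ((hwc t).measurable.comp measurable_fst).ennreal_ofReal.aemeasurable)
    (fun t x => ENNReal.ofReal_le_one.mpr (hw1 t x.1)) fun x => ?_)
  simpa using ENNReal.tendsto_ofReal (hlim x.1)

end Spectrum

theorem box_filter_variance_limit_general (ρ : ℝ) (hρ : 0 < ρ) (Sν : ℝ × ℝ → ℝ)
    (hnonneg : ∀ ω, 0 ≤ Sν ω) (hint : Integrable Sν)
    (κ : ℝ → ℝ)
    (hκ : ∀ Δb : ℝ, 0 < Δb → κ Δb = Real.sqrt (2 * ρ) *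
      ((Δb ^ 2 / π ^ 2) * ∫ ω in (-ρ)..ρ, (_root_.sinc (Δb * ω / π)) ^ 2) ^ (-(1 / 2 : ℝ))) :
    ∃ L : ℝ → ℝ,
      (∀ Δb : ℝ, 0 < Δb →
        Tendsto (fun Δx : ℝ =>
            (κ Δb ^ 2 * Δb ^ 2 / (4 * π ^ 4)) *
              ∫ ω in (Set.Icc (-ρ) ρ ×ˢ Set.Icc (-ρ) ρ),
                ∑' n : ℤ × ℤ,
                  Sν (ω.1 - 2 * n.1 * π / Δx, ω.2 - 2 * n.2 * ρ) *
                    (_root_.sinc ((Δb / π) * (ω.1 - 2 * π * n.1 / Δx))) ^ 2)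
          (𝓝[>] (0 : ℝ)) (𝓝 (L Δb)))
      ∧ Tendsto L (𝓝[>] (0 : ℝ))
          (𝓝 ((1 / (4 * π ^ 2)) * ∫ ω in (Set.Icc (-ρ) ρ ×ˢ Set.Icc (-ρ) ρ),
            ∑' n : ℤ, Sν (ω.1, ω.2 - 2 * n * ρ))) := by
  have hlattice₁ : ∀ (m : ℤ) (Δx : ℝ), 2 * (m : ℝ) * π / Δx = m * (2 * π / Δx) :=
    fun _ _ => by ring
  have hlattice₂ : ∀ (m : ℤ) (Δx : ℝ), 2 * π * (m : ℝ) / Δx = m * (2 * π / Δx) :=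
    fun _ _ => by ring
  have hlattice₃ : ∀ m : ℤ, 2 * (m : ℝ) * ρ = m * (2 * ρ) := fun _ => by ring
  simp_rw [hlattice₁, hlattice₂, hlattice₃]
  have hscale : Tendsto (fun Δx : ℝ => 2 * π / Δx) (𝓝[>] 0) atTop := by
    simpa only [div_eq_mul_inv] using
      tendsto_inv_nhdsGT_zero.const_mul_atTop (by positivity : (0 : ℝ) < 2 * π)
  have hsinc_sq : ∀ c, Continuous fun x => _root_.sinc (c * x) ^ 2 := by fun_prop
  refine ⟨fun Δb => κ Δb ^ 2 * Δb ^ 2 / (4 * π ^ 4) *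
    (aliasedMass ρ Sν fun x => _root_.sinc ((Δb / π) * x) ^ 2).toReal, fun Δb hΔb => ?_, ?_⟩
  · refine (((tendsto_integral_tsum_lattice_mul hρ hint hnonneg (fun _ => sq_nonneg _)
      (fun _ => sinc_sq_le_one _) (hsinc_sq _) ?_).comp hscale).const_mul _)
    simpa using (tendsto_sinc_mul_cocompact (by positivity : Δb / π ≠ 0)).pow 2
  · refine (tendsto_boxFilter_normalization hρ hκ).mul (tendsto_toReal_aliasedMass hρ hint hnonneg
      (fun _ => hsinc_sq _) (fun _ _ => sinc_sq_le_one _) fun x => ?_)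
    have hcont : Continuous fun Δb : ℝ => _root_.sinc ((Δb / π) * x) ^ 2 := by fun_prop
    simpa [_root_.sinc_zero] using (hcont.tendsto 0).mono_left nhdsWithin_le_nhds

/-- the box-filter noise variance `σ²_{m2}(Δ_b, Δ_x)` converges, in the iterated
limit `Δ_x → 0⁺` followed by `Δ_b → 0⁺`, to the ideal-low-pass-filter noise variance
`σ²_{m1}`. -/
theorem box_filter_variance_limit (ρ : ℝ) (hρ : 0 < ρ) (Sν : ℝ × ℝ → ℝ)
    (hnonneg : ∀ ω, 0 ≤ Sν ω) (hint : Integrable Sν)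
    (hdecay : ∃ C r : ℝ, 2 < r ∧ ∀ ω : ℝ × ℝ, 1 ≤ ‖ω‖ → Sν ω ≤ C * ‖ω‖ ^ (-r))
    (κ : ℝ → ℝ)
    (hκ : ∀ Δb : ℝ, 0 < Δb → κ Δb = Real.sqrt (2 * ρ) *
      ((Δb ^ 2 / π ^ 2) * ∫ ω in (-ρ)..ρ, (_root_.sinc (Δb * ω / π)) ^ 2) ^ (-(1 / 2 : ℝ))) :
    ∃ L : ℝ → ℝ,
      (∀ Δb : ℝ, 0 < Δb →
        Tendsto (fun Δx : ℝ =>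
            (κ Δb ^ 2 * Δb ^ 2 / (4 * π ^ 4)) *
              ∫ ω in (Set.Icc (-ρ) ρ ×ˢ Set.Icc (-ρ) ρ),
                ∑' n : ℤ × ℤ,
                  Sν (ω.1 - 2 * n.1 * π / Δx, ω.2 - 2 * n.2 * ρ) *
                    (_root_.sinc ((Δb / π) * (ω.1 - 2 * π * n.1 / Δx))) ^ 2)
          (𝓝[>] (0 : ℝ)) (𝓝 (L Δb)))
      ∧ Tendsto L (𝓝[>] (0 : ℝ))
          (𝓝 ((1 / (4 * π ^ 2)) * ∫ ω in (Set.Icc (-ρ) ρ ×ˢ Set.Icc (-ρ) ρ),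
            ∑' n : ℤ, Sν (ω.1, ω.2 - 2 * n * ρ))) :=
  box_filter_variance_limit_general ρ hρ Sν hnonneg hint κ hκ
end

section
/- Let f(x,t) be bandlimited to the rectangle Ω = [−ρ_x, ρ_x] × [−ρ_t, ρ_t]. Sensors move at common speed v > 0 along trajectories x_j(t) = jΔ + vt, j ∈ ℤ, and take synchronized temporal samples so that all sample points lie on a two-dimensional lattice in the (x,t)-plane generated by the spatial shift (Δ, 0) and an appropriate temporal shift along the trajectory direction at the Nyquist rate (ρ_t + vρ_x)/π. If Δ < π·max{v/ρ_t, 1/ρ_x}, then the translates of Ω by the dual (reciprocal) lattice are pairwise disjoint, i.e., there is no aliasing and f is perfectly recoverable from the samples. -/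
open MeasureTheory Real

/-!
The reciprocal lattice is spanned by `(A, -v A)` and `(0, 2 (ρ_t + v ρ_x))`, where `A = 2π/Δ`,
and the spacing condition says `2ρ_x < A` or `2ρ_t < v A`. A translate of the rectangle `Ω`
meets `Ω` in a null set as soon as one coordinate of the shift is at least the corresponding
side length. For a shift `m (A, -v A) + n (0, 2 (ρ_t + v ρ_x))` with `m = 0` the temporal
coordinate does this; with `m ≠ 0` the spatial one does, unless `|m A| < 2ρ_x`, in which case
the temporal coordinate is at least `2 |n| (ρ_t + v ρ_x) - v |m A| > 2ρ_t` for `n ≠ 0`, and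
`v |m A| ≥ v A > 2ρ_t` for `n = 0`.
-/

theorem volume_image_add_const_Icc_inter_eq_zero {a c d : ℝ} (h : d - c ≤ |a|) :
    volume ((fun x => x + a) '' Set.Icc c d ∩ Set.Icc c d) = 0 := by
  rw [Set.image_add_const_Icc, Set.Icc_inter_Icc, Real.volume_Icc, ENNReal.ofReal_eq_zero,
    sub_nonpos]
  rcases le_abs'.mp h with h | h
  · exact (min_le_left _ _).trans ((by linarith : d + a ≤ c).trans (le_max_right _ _))
  · exact (min_le_right _ _).trans ((by linarith : d ≤ c + a).trans (le_max_left _ _))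

theorem volume_image_add_const_prod_inter_eq_zero {α β : Type*} [MeasureSpace α]
    [MeasureSpace β] [SFinite (volume : Measure β)] [Add α] [Add β]
    {s : Set α} {t : Set β} {a : α} {b : β}
    (h : volume ((· + a) '' s ∩ s) = 0 ∨ volume ((· + b) '' t ∩ t) = 0) :
    volume ((fun ω : α × β => (ω.1 + a, ω.2 + b)) '' (s ×ˢ t) ∩ s ×ˢ t) = 0 := by
  rw [← Set.prod_image_image_eq (m₁ := (· + a)) (m₂ := (· + b)), Set.prod_inter_prod, Measure.volume_eq_prod,
    Measure.prod_prod]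
  rcases h with h | h <;> simp [h]

theorem two_mul_lt_or_two_mul_lt_of_lt_pi_mul_max {ρx ρt v Δ : ℝ} (hρx : 0 < ρx) (hρt : 0 < ρt)
    (hΔ : 0 < Δ) (h : Δ < π * max (v / ρt) (1 / ρx)) :
    2 * ρx < 2 * π / Δ ∨ 2 * ρt < v * (2 * π / Δ) := by
  rcases lt_max_iff.mp (by rwa [mul_max_of_nonneg _ _ pi_pos.le] at h) with h | h
  · right
    rw [show v * (2 * π / Δ) = 2 * (π * v) / Δ by ring, lt_div_iff₀ hΔ]
    rw [← mul_div_assoc, lt_div_iff₀ hρt] at h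
    linarith
  · left
    rw [lt_div_iff₀ hΔ]
    rw [mul_one_div, lt_div_iff₀ hρx] at h
    linarith

theorem two_mul_le_abs_or_two_mul_le_abs_of_reciprocal_lattice {A v ρx ρt : ℝ} (hv : 0 ≤ v)
    (hρx : 0 ≤ ρx) (hρt : 0 ≤ ρt) (hA : 2 * ρx < A ∨ 2 * ρt < v * A) {m n : ℤ}
    (hmn : (m, n) ≠ (0, 0)) :
    2 * ρx ≤ |m * A| ∨ 2 * ρt ≤ |2 * n * (ρt + v * ρx) - v * (m * A)| := by
  have one_le_abs_cast (k : ℤ) (hk : k ≠ 0) : (1 : ℝ) ≤ |(k : ℝ)| := by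
    exact_mod_cast Int.one_le_abs hk
  have hS : 0 ≤ ρt + v * ρx := by positivity
  have habs_n (k : ℤ) : |2 * k * (ρt + v * ρx)| = 2 * |(k : ℝ)| * (ρt + v * ρx) := by
    rw [abs_mul, abs_mul, abs_two, abs_of_nonneg hS]
  rcases eq_or_ne m 0 with rfl | hm
  · right
    rw [Int.cast_zero, zero_mul, mul_zero, sub_zero, habs_n]
    have := mul_le_mul_of_nonneg_right (one_le_abs_cast n (by simpa using hmn)) hS
    nlinarith [mul_nonneg hv hρx]
  by_contra! ⟨hx, ht⟩
  have hA_le : |A| ≤ |m * A| := by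
    rw [abs_mul]
    exact le_mul_of_one_le_left (abs_nonneg _) (one_le_abs_cast m hm)
  have hvA : 2 * ρt < v * |m * A| := by
    rcases hA with hA | hA
    · linarith [le_abs_self A]
    · nlinarith [le_abs_self A, mul_le_mul_of_nonneg_left hA_le hv]
  have hvx : v * |m * A| ≤ v * (2 * ρx) := mul_le_mul_of_nonneg_left hx.le hv
  rcases eq_or_ne n 0 with rfl | hn
  · rw [Int.cast_zero, mul_zero, zero_mul, zero_sub, abs_neg, abs_mul, abs_of_nonneg hv] at ht
    linarith
  · have htri := abs_sub_abs_le_abs_sub (2 * n * (ρt + v * ρx)) (v * (m * A))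
    rw [habs_n, abs_mul v, abs_of_nonneg hv] at htri
    have := mul_le_mul_of_nonneg_right (one_le_abs_cast n hn) hS
    linarith

/-- sampling a field bandlimited to `Ω = [−ρ_x,ρ_x]×[−ρ_t,ρ_t]` with mobile
sensors at spacing `Δ` moving at speed `v`, taking synchronized temporal samples at the
Nyquist rate `(ρ_t + vρ_x)/π` (temporal spacing `T = π/(ρ_t + vρ_x)` along trajectories):
if `Δ < π·max{v/ρ_t, 1/ρ_x}`, the translates of `Ω` by the nonzero reciprocal-lattice
vectors `m·(2π/Δ, −2πv/Δ) + n·(0, 2π/T)` do not overlap `Ω` (in positive measure), i.e.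
there is no aliasing. -/
theorem mobile_rectangular_no_aliasing (ρx ρt v Δ : ℝ)
    (hρx : 0 < ρx) (hρt : 0 < ρt) (hv : 0 < v) (hΔ : 0 < Δ)
    (hspacing : Δ < π * max (v / ρt) (1 / ρx)) :
    ∀ m n : ℤ, (m, n) ≠ (0, 0) →
      volume (((fun ω : ℝ × ℝ =>
          (ω.1 + 2 * π * m / Δ,
           ω.2 + (-(2 * π * v * m / Δ) + 2 * π * n / (π / (ρt + v * ρx))))) ''
            (Set.Icc (-ρx) ρx ×ˢ Set.Icc (-ρt) ρt)) ∩
        (Set.Icc (-ρx) ρx ×ˢ Set.Icc (-ρt) ρt)) = 0 := by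
  intro m n hmn
  have hS : ρt + v * ρx ≠ 0 := by positivity
  have ha : 2 * π * m / Δ = m * (2 * π / Δ) := by ring
  have hb : -(2 * π * v * m / Δ) + 2 * π * n / (π / (ρt + v * ρx)) =
      2 * n * (ρt + v * ρx) - v * (m * (2 * π / Δ)) := by
    field_simp
    ring
  apply volume_image_add_const_prod_inter_eq_zero
  rw [ha, hb]
  refine (two_mul_le_abs_or_two_mul_le_abs_of_reciprocal_lattice hv.le hρx.le hρt.le
    (two_mul_lt_or_two_mul_lt_of_lt_pi_mul_max hρx hρt hΔ hspacing) hmn).imp ?_ ?_ <;>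
    exact fun h => volume_image_add_const_Icc_inter_eq_zero (by linarith)
end

section
/- Let Ω_wave = { (ω_x, ω_t) ∈ ℝ² : |ω_t| ≤ ρ_t and |ω_x| ≤ |ω_t|/c } be the far-field wave spectrum (a bowtie region) with ρ_x = ρ_t/c. Suppose sensors at spacing Δ move at speed v with 0 < v < c and sample on a lattice whose reciprocal lattice contains shifts (−2πn/Δ, (2πn/Δ)v) for n ∈ ℤ along the direction orthogonal to the trajectories. If Δ < (π/ρ_x)(1 + v/c), then the translates of Ω_wave by these shifts do not overlap Ω_wave (no aliasing). -/
/-!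
A point `(x, t)` of the bowtie and its translate `(x - a, t + a v)` both lying in the bowtie force
`c |a| ≤ |t| + |t + a v|`. With both time frequencies confined to `[-ρ_t, ρ_t]`, that sum is at most
`|a v|` when they have opposite signs and at most `2 ρ_t - |a v|` otherwise. The first is impossible
because `|v| < c`, the second because the shortest shift has `2 ρ_t < (c + v) (2π / Δ)`, which is the
spacing condition.
-/

open MeasureTheory Real

def waveSpectrum (c ρt : ℝ) : Set (ℝ × ℝ) :=
  {ω | |ω.2| ≤ ρt ∧ |ω.1| ≤ |ω.2| / c}

lemma abs_add_abs_add_le_max {ρ t s : ℝ} (ht : |t| ≤ ρ) (hts : |t + s| ≤ ρ) :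
    |t| + |t + s| ≤ max (2 * ρ - |s|) |s| := by
  rcases abs_cases t with ⟨et, _⟩ | ⟨et, _⟩ <;>
  rcases abs_cases (t + s) with ⟨ets, _⟩ | ⟨ets, _⟩ <;>
  rcases abs_cases s with ⟨es, _⟩ | ⟨es, _⟩ <;>
  rw [et] at ht ⊢ <;> rw [ets] at hts ⊢ <;>
  linarith [le_max_left (2 * ρ - |s|) |s|, le_max_right (2 * ρ - |s|) |s|]

lemma mul_abs_le_of_mem_waveSpectrum {c ρt x t : ℝ} (hc : 0 < c) (h : (x, t) ∈ waveSpectrum c ρt) :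
    c * |x| ≤ |t| := by
  have := h.2
  rw [le_div_iff₀ hc] at this
  linarith

lemma disjoint_image_shift_waveSpectrum {c ρt v a : ℝ} (hc : 0 < c) (hvc : |v| < c)
    (ha : 2 * ρt < (c + |v|) * |a|) :
    Disjoint ((fun ω : ℝ × ℝ => (ω.1 - a, ω.2 + a * v)) '' waveSpectrum c ρt)
      (waveSpectrum c ρt) := by
  rw [Set.disjoint_left]
  rintro _ ⟨⟨x, t⟩, hxt, rfl⟩ hshift
  have hx := mul_abs_le_of_mem_waveSpectrum hc hxt
  have hxa := mul_abs_le_of_mem_waveSpectrum hc hshift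
  have hsum : c * |a| ≤ |t| + |t + a * v| :=
    calc c * |a| ≤ c * (|x| + |x - a|) := by
          gcongr; simpa using abs_sub x (x - a)
      _ ≤ |t| + |t + a * v| := by rw [mul_add]; exact add_le_add hx hxa
  have hρ : 0 ≤ ρt := (abs_nonneg t).trans hxt.1
  have hmax := hsum.trans (abs_add_abs_add_le_max hxt.1 hshift.1)
  rw [abs_mul] at hmax
  rcases le_max_iff.mp hmax with h | h
  · nlinarith
  · have ha0 : |a| ≤ 0 := by nlinarith
    nlinarith [abs_nonneg v]

lemma two_mul_lt_of_spacing {c ρt v Δ : ℝ} (hc : 0 < c) (hρt : 0 < ρt) (hΔ : 0 < Δ)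
    (hspacing : Δ < (π / (ρt / c)) * (1 + v / c)) :
    2 * ρt < (c + v) * (2 * π / Δ) := by
  have e : (π / (ρt / c)) * (1 + v / c) = π * (c + v) / ρt := by field_simp
  rw [e, lt_div_iff₀ hρt] at hspacing
  rw [mul_div_assoc', lt_div_iff₀ hΔ]
  linarith

lemma two_pi_div_le_abs_shift {Δ : ℝ} (hΔ : 0 < Δ) {n : ℤ} (hn : n ≠ 0) :
    2 * π / Δ ≤ |2 * π * n / Δ| := by
  have hn1 : (1 : ℝ) ≤ |(n : ℝ)| := by exact_mod_cast Int.one_le_abs hn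
  rw [abs_div, abs_mul, abs_of_pos two_pi_pos, abs_of_pos hΔ]
  exact div_le_div_of_nonneg_right (le_mul_of_one_le_right two_pi_pos.le hn1) hΔ.le

/-- for the far-field (bowtie) wave spectrum
`Ω_wave = {(ω_x,ω_t) : |ω_t| ≤ ρ_t, |ω_x| ≤ |ω_t|/c}` with `ρ_x = ρ_t/c`, sampled by
sensors at spacing `Δ` moving at speed `0 < v < c` with reciprocal-lattice shifts
`(−2πn/Δ, (2πn/Δ)v)`: if `Δ < (π/ρ_x)(1 + v/c)` then no translate of `Ω_wave` by a nonzero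
such shift overlaps `Ω_wave` in positive measure (no aliasing). -/
theorem wave_field_mobile_no_aliasing (c ρt ρx v Δ : ℝ)
    (hc : 0 < c) (hρt : 0 < ρt) (hρx : ρx = ρt / c)
    (hv : 0 < v) (hvc : v < c) (hΔ : 0 < Δ)
    (hspacing : Δ < (π / ρx) * (1 + v / c)) :
    ∀ n : ℤ, n ≠ 0 →
      volume (((fun ω : ℝ × ℝ => (ω.1 - 2 * π * n / Δ, ω.2 + (2 * π * n / Δ) * v)) ''
          {ω : ℝ × ℝ | |ω.2| ≤ ρt ∧ |ω.1| ≤ |ω.2| / c}) ∩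
        {ω : ℝ × ℝ | |ω.2| ≤ ρt ∧ |ω.1| ≤ |ω.2| / c}) = 0 := by
  intro n hn
  subst hρx
  have habs_v : |v| = v := abs_of_pos hv
  have hshift : 2 * ρt < (c + |v|) * |2 * π * n / Δ| := by
    rw [habs_v]
    have := two_pi_div_le_abs_shift hΔ hn
    nlinarith [two_mul_lt_of_spacing hc hρt hΔ hspacing]
  have hdisj := disjoint_image_shift_waveSpectrum hc (by rwa [habs_v]) hshift
  exact (congrArg volume (Set.disjoint_iff_inter_eq_empty.mp hdisj)).trans measure_empty
end

section
/- For the wave-field setup, mobile sampling at speed v < c increases the maximum alias-free inter-sensor spacing over static sampling by exactly the factor (1 + v/c): static sampling requires Δ < π/ρ_x while mobile sampling permits Δ < (π/ρ_x)(1 + v/c). -/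
open MeasureTheory Real

/-!
The spectrum of the wave field is the double cone `K = {|ω_t| ≤ ρ_t, c |ω_x| ≤ |ω_t|}`, and
sampling at spacing `Δ` by sensors moving at speed `v` replicates it along the vectors
`σ (-1, v)` with `σ ∈ (2π/Δ) ℤ`. If `ω` and `ω + σ (-1, v)` both lie in `K`, then
`c |σ| ≤ |ω_t| + |ω_t + σ v|`; since `v < c` the two time frequencies cannot have opposite signs
unless `σ = 0`, and then `|ω_t| + |ω_t + σ v| ≤ 2 ρ_t - |σ| v`. Hence replicas overlap only when
`|σ| (c + v) ≤ 2 ρ_t`, which `Δ < π (c + v) / ρ_t` rules out. Static sampling is the case `v = 0`.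
-/

def waveCone (c ρ : ℝ) : Set (ℝ × ℝ) :=
  {ω | |ω.2| ≤ ρ ∧ |ω.1| ≤ |ω.2| / c}

def mobileShift (σ v : ℝ) (ω : ℝ × ℝ) : ℝ × ℝ :=
  (ω.1 - σ, ω.2 + σ * v)

lemma mobileShift_zero (σ : ℝ) : mobileShift σ 0 = fun ω => (ω.1 - σ, ω.2) := by
  funext ω
  simp [mobileShift]

lemma abs_add_abs_add_abs_le_or_eq {a d ρ : ℝ} (ha : |a| ≤ ρ) (had : |a + d| ≤ ρ) :
    |a| + |a + d| + |d| ≤ 2 * ρ ∨ |a| + |a + d| = |d| := by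
  rcases abs_cases a with ⟨ea, _⟩ | ⟨ea, _⟩ <;>
  rcases abs_cases (a + d) with ⟨ead, _⟩ | ⟨ead, _⟩ <;>
  rcases abs_cases d with ⟨ed, _⟩ | ⟨ed, _⟩ <;>
  simp only [ea, ead, ed] at ha had ⊢ <;>
  first | left; linarith | right; linarith

section

variable {c ρ σ v : ℝ}

lemma abs_mul_le_abs_add_abs_of_mem_waveCone (hc : 0 < c) {ω : ℝ × ℝ} (hω : ω ∈ waveCone c ρ)
    (hσω : mobileShift σ v ω ∈ waveCone c ρ) : |σ| * c ≤ |ω.2| + |ω.2 + σ * v| := by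
  have h₁ : |ω.1| * c ≤ |ω.2| := (le_div_iff₀ hc).mp hω.2
  have h₂ : |ω.1 - σ| * c ≤ |ω.2 + σ * v| := (le_div_iff₀ hc).mp hσω.2
  have hσ : |σ| ≤ |ω.1| + |ω.1 - σ| := by
    simpa using abs_sub ω.1 (ω.1 - σ)
  nlinarith

lemma abs_mul_add_le_of_mem_waveCone (hc : 0 < c) (hv : 0 ≤ v) (hvc : v < c) {ω : ℝ × ℝ}
    (hω : ω ∈ waveCone c ρ) (hσω : mobileShift σ v ω ∈ waveCone c ρ) :
    |σ| * (c + v) ≤ 2 * ρ := by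
  have hsum := abs_mul_le_abs_add_abs_of_mem_waveCone hc hω hσω
  have hσv : |σ * v| = |σ| * v := by rw [abs_mul, abs_of_nonneg hv]
  rcases abs_add_abs_add_abs_le_or_eq hω.1 hσω.1 with hsame | hopp
  · rw [hσv] at hsame
    linarith
  · have hσ : |σ| = 0 := by
      rw [hσv] at hopp
      nlinarith [abs_nonneg σ]
    have hρ : 0 ≤ ρ := (abs_nonneg _).trans hω.1
    rw [hσ]
    linarith

lemma mobileShift_image_inter_waveCone_eq_empty (hc : 0 < c) (hv : 0 ≤ v) (hvc : v < c)
    (hσ : 2 * ρ < |σ| * (c + v)) : mobileShift σ v '' waveCone c ρ ∩ waveCone c ρ = ∅ := by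
  rw [Set.eq_empty_iff_forall_notMem]
  rintro _ ⟨⟨ω, hω, rfl⟩, hσω⟩
  exact (abs_mul_add_le_of_mem_waveCone hc hv hvc hω hσω).not_gt hσ

end

lemma two_mul_lt_abs_two_pi_mul_div_mul {a ρ Δ : ℝ} {n : ℤ} (ha : 0 < a) (hρ : 0 < ρ)
    (hΔ : 0 < Δ) (hΔa : Δ < π * a / ρ) (hn : n ≠ 0) : 2 * ρ < |2 * π * n / Δ| * a := by
  have hn : (1 : ℝ) ≤ |(n : ℝ)| := by exact_mod_cast Int.one_le_abs hn
  have hΔρ : Δ * ρ < π * a := (lt_div_iff₀ hρ).mp hΔa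
  have habs : |2 * π * n / Δ| = 2 * π * |(n : ℝ)| / Δ := by
    rw [abs_div, abs_mul, abs_of_pos two_pi_pos, abs_of_pos hΔ]
  rw [habs, div_mul_eq_mul_div, lt_div_iff₀ hΔ]
  nlinarith [mul_le_mul_of_nonneg_left hn (by positivity : 0 ≤ 2 * π * a)]

theorem volume_mobileShift_image_inter_waveCone {c ρ v Δ : ℝ} {n : ℤ} (hc : 0 < c)
    (hρ : 0 < ρ) (hv : 0 ≤ v) (hvc : v < c) (hΔ : 0 < Δ) (hΔρ : Δ < π * (c + v) / ρ)
    (hn : n ≠ 0) : volume (mobileShift (2 * π * n / Δ) v '' waveCone c ρ ∩ waveCone c ρ) = 0 := by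
  rw [mobileShift_image_inter_waveCone_eq_empty hc hv hvc
    (two_mul_lt_abs_two_pi_mul_div_mul (by linarith) hρ hΔ hΔρ hn), measure_empty]

/-- for the wave-field setup, static sampling is alias-free for
`Δ < π/ρ_x`, mobile sampling at speed `v < c` is alias-free for `Δ < (π/ρ_x)(1 + v/c)`,
and the ratio of the two spacing bounds equals `1 + v/c`. -/
theorem wave_field_spacing_improvement (c ρt ρx v : ℝ)
    (hc : 0 < c) (hρt : 0 < ρt) (hρx : ρx = ρt / c) (hv : 0 < v) (hvc : v < c) :
    (∀ Δ : ℝ, 0 < Δ → Δ < π / ρx →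
      ∀ n : ℤ, n ≠ 0 →
        volume (((fun ω : ℝ × ℝ => (ω.1 - 2 * π * n / Δ, ω.2)) ''
            {ω : ℝ × ℝ | |ω.2| ≤ ρt ∧ |ω.1| ≤ |ω.2| / c}) ∩
          {ω : ℝ × ℝ | |ω.2| ≤ ρt ∧ |ω.1| ≤ |ω.2| / c}) = 0)
    ∧ (∀ Δ : ℝ, 0 < Δ → Δ < (π / ρx) * (1 + v / c) →
      ∀ n : ℤ, n ≠ 0 →
        volume (((fun ω : ℝ × ℝ => (ω.1 - 2 * π * n / Δ, ω.2 + (2 * π * n / Δ) * v)) ''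
            {ω : ℝ × ℝ | |ω.2| ≤ ρt ∧ |ω.1| ≤ |ω.2| / c}) ∩
          {ω : ℝ × ℝ | |ω.2| ≤ ρt ∧ |ω.1| ≤ |ω.2| / c}) = 0)
    ∧ ((π / ρx) * (1 + v / c)) / (π / ρx) = 1 + v / c := by
  have hstatic : π / ρx = π * (c + 0) / ρt := by rw [hρx, add_zero]; field_simp
  have hmobile : π / ρx * (1 + v / c) = π * (c + v) / ρt := by rw [hρx]; field_simp
  refine ⟨fun Δ hΔ hΔρ n hn => ?_, fun Δ hΔ hΔρ n hn => ?_, ?_⟩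
  · rw [← mobileShift_zero]
    exact volume_mobileShift_image_inter_waveCone hc hρt le_rfl hc hΔ (hstatic ▸ hΔρ) hn
  · exact volume_mobileShift_image_inter_waveCone hc hρt hv.le hvc hΔ (hmobile ▸ hΔρ) hn
  · exact mul_div_cancel_left₀ _ (by rw [hρx]; positivity)
end
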